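/- Let φ : PSL(2,ℤ) → ℤ/6 be the homomorphism determined by φ(x) = 3 and φ(y) = 2, where PSL(2,ℤ) = ⟨x, y : x² = y³ = 1⟩. Then each of the four stone monodromies ℙ_□ = yxy, ℙ_○ = xyxyx, ℙ_> = y²x, ℙ_< = xy² is sent by φ to 1 ∈ ℤ/6 (i.e., to an element of order 6). Consequently, if a product of n stone monodromies equals the identity in PSL(2,ℤ), then n is divisible by 6. -/

import Mathlib

/-!
The homomorphism `φ : SL(2, ℤ) → ℤ/6` is assembled from two finite quotients: reduction mod 2
followed by the sign of `SL(2, 𝔽₂) ≅ S₃`, and reduction mod 3 followed by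
`SL(2, 𝔽₃) → SL(2, 𝔽₃) / Q₈ ≅ ℤ/3`; both characters are checked to be multiplicative by
enumeration. Every stone word has `φ`-value `1` (for instance `φ(yxy) = 2 + 3 + 2`), so a product
of `n` stones is sent to `n`, while `±1` is sent to `0` because `-1 = x²` and `φ(x) = 3`.
-/

open Matrix

instance : Fact (Even (Fintype.card (Fin 2))) := ⟨⟨1, rfl⟩⟩

def xSL : Matrix.SpecialLinearGroup (Fin 2) ℤ :=
  ⟨!![0, 1; -1, 0], by norm_num [Matrix.det_fin_two_of]⟩

def ySL : Matrix.SpecialLinearGroup (Fin 2) ℤ :=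
  ⟨!![0, 1; -1, 1], by norm_num [Matrix.det_fin_two_of]⟩

inductive Stone : Type
  | C | S | R | L
deriving DecidableEq

/-- the stone monodromies as words in x, y inside SL(2,ℤ). -/
def stoneSL : Stone → Matrix.SpecialLinearGroup (Fin 2) ℤ
  | .S => ySL * xSL * ySL
  | .C => xSL * ySL * xSL * ySL * xSL
  | .R => ySL ^ 2 * xSL
  | .L => xSL * ySL ^ 2

open Matrix.SpecialLinearGroup

/-- The sign character of `SL(2, 𝔽₂) ≅ S₃`, with values in `{0, 3} ⊆ ℤ/6`. -/
def sl2ZMod2Char : SpecialLinearGroup (Fin 2) (ZMod 2) →* Multiplicative (ZMod 6) where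
  toFun A := .ofAdd (3 * (A 0 0 * A 0 1 + A 0 1 * A 1 0 + A 1 0 * A 1 1).val)
  map_one' := by decide
  map_mul' := by decide

/-- The character of `SL(2, 𝔽₃)` with kernel the quaternion group `Q₈`, with values in
`{0, 2, 4} ⊆ ℤ/6`; the polynomial was found by interpolating it on the 24 elements. -/
def sl2ZMod3Char : SpecialLinearGroup (Fin 2) (ZMod 3) →* Multiplicative (ZMod 6) where
  toFun A := .ofAdd (4 * (A 0 0 * A 0 1 * (1 + A 1 0 ^ 2) + A 1 0 * A 1 1 * (1 + A 0 0 ^ 2)).val)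
  map_one' := by decide
  map_mul' := by decide

def sl2IntChar : SpecialLinearGroup (Fin 2) ℤ →* Multiplicative (ZMod 6) :=
  sl2ZMod2Char.comp (map (Int.castRingHom _)) * sl2ZMod3Char.comp (map (Int.castRingHom _))

lemma sl2IntChar_xSL : sl2IntChar xSL = .ofAdd 3 := by decide
lemma sl2IntChar_ySL : sl2IntChar ySL = .ofAdd 2 := by decide

lemma xSL_sq : xSL ^ 2 = -1 := by
  ext i j
  fin_cases i <;> fin_cases j <;> rfl

lemma sl2IntChar_neg_one : sl2IntChar (-1) = 1 := by
  rw [← xSL_sq, map_pow, sl2IntChar_xSL]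
  decide

lemma sl2IntChar_stoneSL (s : Stone) : sl2IntChar (stoneSL s) = .ofAdd 1 := by
  cases s <;> simp only [stoneSL, map_mul, map_pow, sl2IntChar_xSL, sl2IntChar_ySL] <;> decide

theorem map_list_prod_map_eq_pow_length {ι M N : Type*} [Monoid M] [Monoid N] (φ : M →* N)
    {f : ι → M} {g : N} (hf : ∀ i, φ (f i) = g) (l : List ι) :
    φ (l.map f).prod = g ^ l.length := by
  rw [map_list_prod, List.map_map, List.prod_eq_pow_card _ g (by simp [hf]), List.length_map]

theorem stmt9 :
    ∃ φ : Matrix.SpecialLinearGroup (Fin 2) ℤ →* Multiplicative (ZMod 6),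
      φ xSL = Multiplicative.ofAdd 3 ∧ φ ySL = Multiplicative.ofAdd 2 ∧
      (∀ s : Stone, φ (stoneSL s) = Multiplicative.ofAdd 1) ∧
      ∀ l : List Stone,
        ((l.map stoneSL).prod = 1 ∨ (l.map stoneSL).prod = -1) →
          6 ∣ l.length := by
  refine ⟨sl2IntChar, sl2IntChar_xSL, sl2IntChar_ySL, sl2IntChar_stoneSL, fun l hl => ?_⟩
  have hprod : sl2IntChar (l.map stoneSL).prod = 1 := by
    rcases hl with h | h <;> simp only [h, map_one, sl2IntChar_neg_one]
  rw [map_list_prod_map_eq_pow_length sl2IntChar sl2IntChar_stoneSL, ← ofAdd_nsmul, ofAdd_eq_one,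
    nsmul_one] at hprod
  exact (ZMod.natCast_eq_zero_iff _ _).mp hprod
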